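/- Let R be a ring and Π a nonzero R-module of finite length whose socle S = soc(Π) is a simple module occurring with multiplicity one among the composition factors of Π. If M is a nonzero submodule of Π such that every simple quotient of M is isomorphic to S, then M = soc(Π); in particular, M is a simple module. -/

import Mathlib

/-- The socle of a module: the sum of all its simple submodules, i.e. its maximal
semisimple submodule. -/
def moduleSocle (R M : Type*) [Ring R] [AddCommGroup M] [Module R M] :
    Submodule R M :=
  sSup {N : Submodule R M | IsSimpleModule R N}

/-- For submodules `N ≤ P` of `M`, the section `P / N` (the quotient of `P` by the
image of `N` in `P`); for a composition series `B_0 ⊂ B_1 ⊂ ⋯ ⊂ B_k`, the modules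
`sectionQuot (B i) (B (i+1))` are its composition factors. -/
def sectionQuot {R M : Type*} [Ring R] [AddCommGroup M] [Module R M]
    (N P : Submodule R M) : Type _ :=
  P ⧸ (Submodule.comap P.subtype N)

noncomputable instance {R M : Type*} [Ring R] [AddCommGroup M] [Module R M]
    (N P : Submodule R M) : AddCommGroup (sectionQuot N P) :=
  inferInstanceAs (AddCommGroup (P ⧸ (Submodule.comap P.subtype N)))

noncomputable instance {R M : Type*} [Ring R] [AddCommGroup M] [Module R M]
    (N P : Submodule R M) : Module R (sectionQuot N P) :=
  inferInstanceAs (Module R (P ⧸ (Submodule.comap P.subtype N)))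

/-! Let `N ⋖ M` be a maximal submodule. Refining `0 ≤ N ⋖ M ≤ Π` to a composition series, its
first factor is the unique simple submodule `soc(Π)` and the factor `M/N` is a simple quotient of
`M`, hence also `≅ soc(Π)`. Multiplicity one forces the two factors to coincide, so `N = 0`, `M`
is simple, and therefore `M = soc(Π)`. -/

section CovBySeries

variable {α : Type*} [PartialOrder α] [WellFoundedLT α] [WellFoundedGT α]

theorem exists_relSeries_covBy_of_le {x y : α} (h : x ≤ y) :
    ∃ t : RelSeries {(a, b) : α × α | a ⋖ b}, t.head = x ∧ t.last = y := by
  obtain ⟨a, ha₀, n, han, hcov⟩ := exists_covBy_seq_of_wellFoundedLT_wellFoundedGT_of_le h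
  exact ⟨⟨n, fun i ↦ a i, fun i ↦ hcov i i.isLt⟩, ha₀, han⟩

theorem exists_relSeries_covBy_through [BoundedOrder α] {a b : α} (hab : a ⋖ b) :
    ∃ t : RelSeries {(a, b) : α × α | a ⋖ b}, t.head = ⊥ ∧ t.last = ⊤ ∧
      ∃ j : Fin t.length, t j.castSucc = a ∧ t j.succ = b := by
  obtain ⟨p, hp₀, hpa⟩ := exists_relSeries_covBy_of_le (bot_le : ⊥ ≤ a)
  obtain ⟨q, hqb, hq₁⟩ := exists_relSeries_covBy_of_le (le_top : b ≤ ⊤)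
  have connect : p.last ⋖ q.head := hpa ▸ hqb ▸ hab
  refine ⟨p.append q connect, (p.head_append q connect).trans hp₀,
    (p.last_append q connect).trans hq₁, ⟨p.length, by simp⟩, ?_, ?_⟩
  · exact (congrArg _ (Fin.ext rfl)).trans ((p.append_apply_left q connect _).trans hpa)
  · exact (congrArg _ (Fin.ext rfl)).trans ((p.append_apply_right q connect 0).trans hqb)

end CovBySeries

section Socle

variable {R P : Type*} [Ring R] [AddCommGroup P] [Module R P]

theorem eq_moduleSocle_of_isAtom (hsoc : IsSimpleModule R (moduleSocle R P))
    {A : Submodule R P} (hA : IsAtom A) : A = moduleSocle R P :=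
  (isSimpleModule_iff_isAtom.mp hsoc).le_iff_eq hA.1 |>.mp <|
    le_sSup (isSimpleModule_iff_isAtom.mpr hA)

theorem isSimpleModule_sectionQuot_of_covBy {A B : Submodule R P} (h : A ⋖ B) :
    IsSimpleModule R (sectionQuot A B) :=
  (covBy_iff_quot_is_simple h.le).mp h

noncomputable def sectionQuotBotEquiv (A : Submodule R P) : sectionQuot ⊥ A ≃ₗ[R] A :=
  Submodule.quotEquivOfEqBot _ (by rw [Submodule.comap_bot, Submodule.ker_subtype])

end Socle

theorem eq_socle_of_simple_quotients_general {R : Type*} [Ring R]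
    {P : Type*} [AddCommGroup P] [Module R P]
    (hfl : IsFiniteLength R P)
    (hsoc_simple : IsSimpleModule R (moduleSocle R P))
    (hmult : ∀ (k : ℕ) (B : Fin (k + 1) → Submodule R P),
      B 0 = ⊥ → B (Fin.last k) = ⊤ →
      (∀ i : Fin k, B i.castSucc < B i.succ ∧
        IsSimpleModule R (sectionQuot (B i.castSucc) (B i.succ))) →
      ∃! i : Fin k,
        Nonempty ((sectionQuot (B i.castSucc) (B i.succ)) ≃ₗ[R] moduleSocle R P))
    (M : Submodule R P) (hMnz : M ≠ ⊥)
    (hquot : ∀ N : Submodule R M, IsSimpleModule R (M ⧸ N) →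
      Nonempty ((M ⧸ N) ≃ₗ[R] moduleSocle R P)) :
    M = moduleSocle R P ∧ IsSimpleModule R M := by
  obtain ⟨_, _⟩ := isFiniteLength_iff_isNoetherian_isArtinian.mp hfl
  obtain ⟨N, -, hNM⟩ := exists_le_covBy_of_lt (bot_lt_iff_ne_bot.mpr hMnz)
  obtain ⟨t, ht₀, ht₁, j, hjN, hjM⟩ := exists_relSeries_covBy_through hNM
  obtain ⟨i, -, huniq⟩ := hmult t.length t ht₀ ht₁ fun i ↦
    ⟨(t.step i).lt, isSimpleModule_sectionQuot_of_covBy (t.step i)⟩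
  let i₀ : Fin t.length := ⟨0, j.pos⟩
  have hfirst : t i₀.castSucc = ⊥ := ht₀
  have hsecond : t i₀.succ = moduleSocle R P :=
    eq_moduleSocle_of_isAtom hsoc_simple (bot_covBy_iff.mp (hfirst ▸ t.step i₀))
  have hi₀ : i₀ = i := huniq i₀ (by
    dsimp only; rw [hfirst, hsecond]; exact ⟨sectionQuotBotEquiv _⟩)
  have hj : j = i := huniq j (by
    dsimp only; rw [hjN, hjM]; exact hquot _ (isSimpleModule_sectionQuot_of_covBy hNM))
  have hNbot : N = ⊥ := by rw [← hjN, hj, ← hi₀, hfirst]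
  have hMS : M = moduleSocle R P :=
    eq_moduleSocle_of_isAtom hsoc_simple (bot_covBy_iff.mp (hNbot ▸ hNM))
  exact ⟨hMS, hMS ▸ hsoc_simple⟩

/-- **Abstract SI trick.** Let `R` be a ring and `Π` a nonzero `R`-module of finite
length whose socle `S = soc(Π)` is a simple module occurring with multiplicity one
among the composition factors of `Π` (i.e. in every composition series
`0 = B_0 ⊂ B_1 ⊂ ⋯ ⊂ B_k = Π` exactly one factor `B_{i+1}/B_i` is isomorphic to
`S`).  If `M` is a nonzero submodule of `Π` such that every simple quotient of `M`
is isomorphic to `S`, then `M = soc(Π)`; in particular, `M` is a simple module. -/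
theorem eq_socle_of_simple_quotients {R : Type*} [Ring R]
    {P : Type*} [AddCommGroup P] [Module R P]
    (hfl : IsFiniteLength R P) (hnz : Nontrivial P)
    (hsoc_simple : IsSimpleModule R (moduleSocle R P))
    (hmult : ∀ (k : ℕ) (B : Fin (k + 1) → Submodule R P),
      B 0 = ⊥ → B (Fin.last k) = ⊤ →
      (∀ i : Fin k, B i.castSucc < B i.succ ∧
        IsSimpleModule R (sectionQuot (B i.castSucc) (B i.succ))) →
      ∃! i : Fin k,
        Nonempty ((sectionQuot (B i.castSucc) (B i.succ)) ≃ₗ[R] moduleSocle R P))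
    (M : Submodule R P) (hMnz : M ≠ ⊥)
    (hquot : ∀ N : Submodule R M, IsSimpleModule R (M ⧸ N) →
      Nonempty ((M ⧸ N) ≃ₗ[R] moduleSocle R P)) :
    M = moduleSocle R P ∧ IsSimpleModule R M :=
  eq_socle_of_simple_quotients_general hfl hsoc_simple hmult M hMnz hquot
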